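/- As the natural number k tends to infinity, (1/k) ∑_{m=0}^{k-1} Γ(m+1,k)/m! tends to 0, where Γ is the upper incomplete gamma function. -/

import Mathlib

/-!
Since `-e^{-t} ∑_{j ≤ m} t^j/j!` is an antiderivative of `t^m e^{-t}/m!`, we get
`Γ(m+1,x)/m! = e^{-x} ∑_{j ≤ m} x^j/j!`. Summing over `m < k` at `x = k`, the term `k^j/j!`
occurs `k - j` times, and `(k - j) k^j/j!` telescopes (it is `(j+1) k^{j+1}/(j+1)! - j k^j/j!`),
so the average equals `e^{-k} k^k/k!`, which is at most `1/√(2πk)` by Stirling's lower bound.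
-/

open MeasureTheory Real Filter Finset
open scoped Nat Topology

theorem hasDerivAt_sum_range_succ_pow_div_factorial (m : ℕ) (t : ℝ) :
    HasDerivAt (fun t : ℝ => ∑ j ∈ range (m + 1), t ^ j / j !)
      (∑ j ∈ range m, t ^ j / j !) t := by
  induction m with
  | zero => simpa using hasDerivAt_const t (1 : ℝ)
  | succ m ih =>
    simp only [sum_range_succ _ (m + 1)]
    refine (ih.add ((hasDerivAt_pow (m + 1) t).div_const ((m + 1)! : ℝ))).congr_deriv ?_
    rw [sum_range_succ, Nat.factorial_succ]
    push_cast
    field_simp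

theorem hasDerivAt_neg_exp_neg_mul_sum_range_succ (m : ℕ) (t : ℝ) :
    HasDerivAt (fun t : ℝ => -(exp (-t) * ∑ j ∈ range (m + 1), t ^ j / j !))
      (t ^ m * exp (-t) / m !) t := by
  have hexp : HasDerivAt (fun t : ℝ => exp (-t)) (-exp (-t)) t := by
    simpa using (hasDerivAt_neg t).exp
  refine (hexp.mul (hasDerivAt_sum_range_succ_pow_div_factorial m t)).neg.congr_deriv ?_
  rw [sum_range_succ]
  ring

theorem integrableOn_Ioi_pow_mul_exp_neg (m : ℕ) {x : ℝ} (hx : 0 ≤ x) :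
    IntegrableOn (fun t : ℝ => t ^ m * exp (-t)) (Set.Ioi x) := by
  have h := (GammaIntegral_convergent (s := (m + 1 : ℝ)) (by positivity)).mono_set
    (Set.Ioi_subset_Ioi hx)
  refine h.congr_fun (fun t _ => ?_) measurableSet_Ioi
  dsimp only
  rw [add_sub_cancel_right, rpow_natCast, mul_comm]

theorem tendsto_exp_neg_mul_sum_range_pow_div_factorial (n : ℕ) :
    Tendsto (fun t : ℝ => exp (-t) * ∑ j ∈ range n, t ^ j / j !) atTop (𝓝 0) := by
  have h := tendsto_finsetSum (range n) fun j _ =>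
    (tendsto_pow_mul_exp_neg_atTop_nhds_zero j).div_const (j ! : ℝ)
  simp only [zero_div, sum_const_zero] at h
  refine h.congr fun t => ?_
  rw [mul_sum]
  exact sum_congr rfl fun j _ => by ring

theorem integral_Ioi_pow_mul_exp_neg_div_factorial (m : ℕ) {x : ℝ} (hx : 0 ≤ x) :
    (∫ t in Set.Ioi x, t ^ m * exp (-t)) / m !
      = exp (-x) * ∑ j ∈ range (m + 1), x ^ j / j ! := by
  have h := integral_Ioi_of_hasDerivAt_of_tendsto'
    (fun t _ => hasDerivAt_neg_exp_neg_mul_sum_range_succ m t)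
    ((integrableOn_Ioi_pow_mul_exp_neg m hx).div_const (m ! : ℝ))
    (by simpa using (tendsto_exp_neg_mul_sum_range_pow_div_factorial (m + 1)).neg)
  rw [← integral_div]
  simpa using h

theorem sum_range_sum_range_succ {M : Type*} [AddCommMonoid M] (f : ℕ → M) (n : ℕ) :
    ∑ m ∈ range n, ∑ j ∈ range (m + 1), f j = ∑ j ∈ range n, (n - j) • f j := by
  induction n with
  | zero => simp
  | succ n ih =>
    have hsucc : ∀ j ∈ range n, (n + 1 - j) • f j = (n - j) • f j + f j := fun j hj => by
      rw [Nat.sub_add_comm (mem_range.mp hj).le, succ_nsmul]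
    rw [sum_range_succ, ih, sum_range_succ f n, sum_range_succ _ n, sum_congr rfl hsucc,
      sum_add_distrib, Nat.add_sub_cancel_left, one_smul, add_assoc]

theorem sum_range_sub_mul_pow_div_factorial {K : Type*} [Field K] [CharZero K] (x : K) (n : ℕ) :
    ∑ j ∈ range n, (x - j) * (x ^ j / j !) = n * x ^ n / n ! := by
  have htelescope : ∀ j : ℕ,
      (x - j) * (x ^ j / j !) = (j + 1 : ℕ) * x ^ (j + 1) / (j + 1)! - j * x ^ j / j ! := by
    intro j
    rw [Nat.factorial_succ]
    push_cast
    field_simp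
    ring
  simp only [htelescope, sum_range_sub (fun j : ℕ => (j : K) * x ^ j / j !)]
  simp

theorem sum_range_integral_Ioi_pow_mul_exp_neg_div_factorial (k : ℕ) :
    ∑ m ∈ range k, (∫ t in Set.Ioi (k : ℝ), t ^ m * exp (-t)) / m !
      = k * (exp (-k) * k ^ k / k !) := by
  have hcount : ∀ j ∈ range k, (k - j) • ((k : ℝ) ^ j / j !) = (k - j) * ((k : ℝ) ^ j / j !) :=
    fun j hj => by rw [nsmul_eq_mul, Nat.cast_sub (mem_range.mp hj).le]
  simp only [integral_Ioi_pow_mul_exp_neg_div_factorial _ k.cast_nonneg, ← mul_sum,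
    sum_range_sum_range_succ, sum_congr rfl hcount, sum_range_sub_mul_pow_div_factorial]
  ring

theorem exp_neg_mul_pow_div_factorial_le {k : ℕ} (hk : k ≠ 0) :
    exp (-k) * k ^ k / k ! ≤ 1 / √(2 * π * k) := by
  have hpow : exp (-k) * k ^ k = ((k : ℝ) / exp 1) ^ k := by
    rw [div_pow, ← exp_nat_mul, mul_one, exp_neg, inv_mul_eq_div]
  rw [hpow, div_le_div_iff₀ (by positivity) (by positivity), one_mul, mul_comm]
  exact Stirling.le_factorial_stirling k

theorem tendsto_exp_neg_mul_pow_div_factorial :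
    Tendsto (fun k : ℕ => exp (-k) * k ^ k / k !) atTop (𝓝 0) := by
  have hbound : Tendsto (fun k : ℕ => 1 / √(2 * π * k)) atTop (𝓝 0) := by
    simp only [one_div]
    exact tendsto_inv_atTop_zero.comp <| tendsto_sqrt_atTop.comp <|
      tendsto_natCast_atTop_atTop.const_mul_atTop (by positivity)
  exact tendsto_of_tendsto_of_tendsto_of_le_of_le' tendsto_const_nhds hbound
    (.of_forall fun k => by positivity)
    ((eventually_ne_atTop 0).mono fun k hk => exp_neg_mul_pow_div_factorial_le hk)

/-- As `k → ∞` (natural), `(1/k) ∑_{m=0}^{k-1} Γ(m+1,k)/m! → 0`,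
where `Γ(m+1,k) = ∫_k^∞ t^m e^{-t} dt` is the upper incomplete gamma function. -/
theorem tendsto_avg_upper_incomplete_gamma :
    Tendsto (fun k : ℕ =>
        (1 / (k : ℝ)) * ∑ m ∈ Finset.range k,
          (∫ t in Set.Ioi (k : ℝ), t ^ m * Real.exp (-t)) / (Nat.factorial m))
      atTop (nhds 0) := by
  refine tendsto_exp_neg_mul_pow_div_factorial.congr' ?_
  filter_upwards [eventually_ne_atTop 0] with k hk
  rw [sum_range_integral_Ioi_pow_mul_exp_neg_div_factorial, one_div,
    inv_mul_cancel_left₀ (Nat.cast_ne_zero.mpr hk)]
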